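/- For every μ > 0 there exists a smooth compactly supported function v : ℝ² → ℝ with ∫_{ℝ²} (v + Δv)² dx < μ ∫_{ℝ²} v² dx. Consequently, for any β ∈ ℝ there is ε₀ > 0 such that E[εv] < 0 = E[0] for all 0 < ε < ε₀; in particular the uniform state u = 0 is not a local minimizer of the free energy E along the ray through v. -/

import Mathlib

/-!
Localize the critical mode `cos x₀`: for a smooth cutoff `φ` equal to `1` on `[-1, 1]`, take
`v(x) = φ(x₀ / R) cos x₀ · φ(x₁ / R)`. The factors `φ(t / R) cos t` and `φ(t / R)` are approximate
eigenfunctions of `-d²/dt²` for the eigenvalues `1` and `0`: their squared defects stay bounded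
while their squared `L²` norms grow at least like `R`. Since `Δ` acts factorwise, this gives
`∫ (v + Δv)² = O(1 / R) ∫ v²`, which beats `μ ∫ v²` once `R` is large. Along the ray `ε v` the
energy is `ε² (½ ∫ (v + Δv)² - (μ / 2) ∫ v²) + O(ε³)`, hence negative for small `ε > 0`.
-/

open MeasureTheory

/-- The Laplacian of a function on `ℝ²` (Euclidean plane). -/
noncomputable def laplacian (f : EuclideanSpace ℝ (Fin 2) → ℝ)
    (x : EuclideanSpace ℝ (Fin 2)) : ℝ :=
  ∑ i : Fin 2,
    fderiv ℝ (fun y => fderiv ℝ f y (EuclideanSpace.single i (1 : ℝ))) x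
      (EuclideanSpace.single i (1 : ℝ))

/-- The free energy functional of the auxin model. -/
noncomputable def freeEnergy (μ β : ℝ) (u : EuclideanSpace ℝ (Fin 2) → ℝ) : ℝ :=
  ∫ x, (-(μ / 2) * u x ^ 2 + (1 / 2) * (u x + laplacian u x) ^ 2
    + (β / 3) * u x * ‖gradient u x‖ ^ 2 + (1 / 4) * u x ^ 4)

open Real

local notation "ℝ²" => EuclideanSpace ℝ (Fin 2)

theorem Continuous.integrable_pow_of_hasCompactSupport {X : Type*} [TopologicalSpace X]
    [MeasurableSpace X] [OpensMeasurableSpace X] {μ : Measure X} [IsFiniteMeasureOnCompacts μ]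
    {f : X → ℝ} (hf : Continuous f) (hfc : HasCompactSupport f) {n : ℕ} (hn : n ≠ 0) :
    Integrable (fun x => f x ^ n) μ :=
  (hf.pow n).integrable_of_hasCompactSupport (hfc.comp_left (g := (· ^ n)) (zero_pow hn))

theorem HasCompactSupport.comp_div {f : ℝ → ℝ} (hf : HasCompactSupport f) {R : ℝ}
    (hR : R ≠ 0) : HasCompactSupport fun t => f (t / R) := by
  simpa [div_eq_inv_mul] using hf.comp_smul (inv_ne_zero hR)

section Energy

theorem laplacian_const_smul (c : ℝ) (f : ℝ² → ℝ) (x : ℝ²) :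
    laplacian (c • f) x = c * laplacian f x := by
  simp only [laplacian, fderiv_const_smul_field, Finset.mul_sum]
  congr 1 with i
  change fderiv ℝ (c • fun y => fderiv ℝ f y (EuclideanSpace.single i 1)) x _ = _
  rw [fderiv_const_smul_field]
  rfl

theorem gradient_const_smul (c : ℝ) (f : ℝ² → ℝ) (x : ℝ²) :
    gradient (c • f) x = c • gradient f x := by
  simp only [gradient, fderiv_const_smul_field, Pi.smul_apply, map_smul]

theorem ContDiff.continuous_laplacian {f : ℝ² → ℝ} (hf : ContDiff ℝ 2 f) :
    Continuous (laplacian f) := by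
  refine continuous_finsetSum _ fun i _ => ?_
  have : ContDiff ℝ 1 fun y => fderiv ℝ f y (EuclideanSpace.single i 1) :=
    (hf.fderiv_right (by norm_num)).clm_apply contDiff_const
  exact (this.continuous_fderiv one_ne_zero).clm_apply continuous_const

theorem HasCompactSupport.laplacian {f : ℝ² → ℝ} (hf : HasCompactSupport f) :
    HasCompactSupport (laplacian f) := by
  have h (i : Fin 2) : HasCompactSupport fun x =>
      fderiv ℝ (fun y => fderiv ℝ f y (EuclideanSpace.single i 1)) x
        (EuclideanSpace.single i 1) :=
    (hf.fderiv_apply ℝ _).fderiv_apply ℝ _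
  have hsum : _root_.laplacian f = (fun x => fderiv ℝ (fun y => fderiv ℝ f y
      (EuclideanSpace.single 0 1)) x (EuclideanSpace.single 0 1)) + fun x => fderiv ℝ
      (fun y => fderiv ℝ f y (EuclideanSpace.single 1 1)) x (EuclideanSpace.single 1 1) := by
    funext x
    simp [_root_.laplacian, Fin.sum_univ_two]
  exact hsum ▸ (h 0).add (h 1)

theorem freeEnergy_zero (μ β : ℝ) : freeEnergy μ β 0 = 0 := by
  simp [freeEnergy, laplacian]

theorem freeEnergy_smul {v : ℝ² → ℝ} (hv : ContDiff ℝ 2 v) (hcs : HasCompactSupport v)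
    (μ β ε : ℝ) :
    freeEnergy μ β (ε • v) =
      ε ^ 2 * ((∫ x, (v x + laplacian v x) ^ 2) / 2 - μ / 2 * ∫ x, v x ^ 2)
        + ε ^ 3 * (β / 3 * ∫ x, v x * ‖gradient v x‖ ^ 2) + ε ^ 4 * ((∫ x, v x ^ 4) / 4) := by
  have hgrad : Continuous (gradient v) :=
    (InnerProductSpace.toDual ℝ ℝ²).symm.continuous.comp (hv.continuous_fderiv two_ne_zero)
  have h₁ : Integrable fun x => v x ^ 2 :=
    hv.continuous.integrable_pow_of_hasCompactSupport hcs two_ne_zero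
  have h₂ : Integrable fun x => (v x + laplacian v x) ^ 2 :=
    (hv.continuous.add hv.continuous_laplacian).integrable_pow_of_hasCompactSupport
      (hcs.add hcs.laplacian) two_ne_zero
  have h₃ : Integrable fun x => v x * ‖gradient v x‖ ^ 2 :=
    (hv.continuous.mul (hgrad.norm.pow 2)).integrable_of_hasCompactSupport hcs.mul_right
  have h₄ : Integrable fun x => v x ^ 4 :=
    hv.continuous.integrable_pow_of_hasCompactSupport hcs four_ne_zero
  have hexpand (x : ℝ²) :
      -(μ / 2) * (ε • v) x ^ 2 + 1 / 2 * ((ε • v) x + laplacian (ε • v) x) ^ 2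
        + β / 3 * (ε • v) x * ‖gradient (ε • v) x‖ ^ 2 + 1 / 4 * (ε • v) x ^ 4
      = (-(μ / 2) * ε ^ 2) * v x ^ 2 + (ε ^ 2 / 2) * (v x + laplacian v x) ^ 2
        + (β / 3 * ε ^ 3) * (v x * ‖gradient v x‖ ^ 2) + (ε ^ 4 / 4) * v x ^ 4 := by
    simp only [Pi.smul_apply, smul_eq_mul, laplacian_const_smul, gradient_const_smul,
      norm_smul, norm_eq_abs, mul_pow, sq_abs]
    ring
  rw [freeEnergy, integral_congr_ae (.of_forall hexpand),
    integral_add (((h₁.const_mul _).fun_add (h₂.const_mul _)).fun_add (h₃.const_mul _))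
      (h₄.const_mul _),
    integral_add ((h₁.const_mul _).fun_add (h₂.const_mul _)) (h₃.const_mul _),
    integral_add (h₁.const_mul _) (h₂.const_mul _)]
  simp only [integral_const_mul]
  ring

theorem exists_pos_forall_quartic_lt_zero {a : ℝ} (ha : a < 0) (b c : ℝ) :
    ∃ ε₀ > (0 : ℝ), ∀ ε : ℝ, 0 < ε → ε < ε₀ → ε ^ 2 * a + ε ^ 3 * b + ε ^ 4 * c < 0 := by
  have hM : 0 < |b| + |c| + 1 := by positivity
  refine ⟨min 1 (-a / (|b| + |c| + 1)), lt_min one_pos (div_pos (neg_pos.2 ha) hM),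
    fun ε hε hε₀ => ?_⟩
  have hε₁ : ε < 1 := hε₀.trans_le (min_le_left _ _)
  have hεa : ε * (|b| + |c| + 1) < -a :=
    (lt_div_iff₀ hM).1 (hε₀.trans_le (min_le_right _ _))
  have hbc : ε * b + ε ^ 2 * c < -a := by
    have : ε ^ 2 * c ≤ ε * |c| := by
      nlinarith [le_abs_self c, abs_nonneg c, mul_le_mul_of_nonneg_left hε₁.le hε.le]
    nlinarith [le_abs_self b]
  have : ε ^ 2 * a + ε ^ 3 * b + ε ^ 4 * c = ε ^ 2 * (a + (ε * b + ε ^ 2 * c)) := by ring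
  rw [this]
  exact mul_neg_of_pos_of_neg (by positivity) (by linarith)

end Energy

namespace EuclideanSpace

theorem measurePreserving_apply_zero_apply_one :
    MeasurePreserving (fun x : ℝ² => (x 0, x 1)) :=
  (volume_preserving_finTwoArrow ℝ).comp (volume_preserving_symm_measurableEquiv_toLp (Fin 2))

theorem measurableEmbedding_apply_zero_apply_one :
    MeasurableEmbedding (fun x : ℝ² => (x 0, x 1)) :=
  ((MeasurableEquiv.toLp 2 (Fin 2 → ℝ)).symm.trans
    (MeasurableEquiv.finTwoArrow)).measurableEmbedding

theorem integral_mul_apply_zero_apply_one (f g : ℝ → ℝ) :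
    ∫ x : ℝ², f (x 0) * g (x 1) = (∫ t, f t) * ∫ t, g t := by
  rw [← integral_prod_mul, ← Measure.volume_eq_prod]
  exact measurePreserving_apply_zero_apply_one.integral_comp
    measurableEmbedding_apply_zero_apply_one (fun p => f p.1 * g p.2)

theorem integrable_mul_apply_zero_apply_one {f g : ℝ → ℝ} (hf : Integrable f)
    (hg : Integrable g) : Integrable fun x : ℝ² => f (x 0) * g (x 1) :=
  measurePreserving_apply_zero_apply_one.integrable_comp_emb
    measurableEmbedding_apply_zero_apply_one |>.2 (hf.mul_prod hg)

theorem hasCompactSupport_mul_apply_zero_apply_one {f g : ℝ → ℝ} (hf : HasCompactSupport f)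
    (hg : HasCompactSupport g) : HasCompactSupport fun x : ℝ² => f (x 0) * g (x 1) := by
  let e : ℝ² ≃ₜ ℝ × ℝ := (EuclideanSpace.equiv (Fin 2) ℝ).toHomeomorph.trans .finTwoArrow
  refine .intro (e.isCompact_preimage.2 (hf.isCompact.prod hg.isCompact)) fun x hx => ?_
  rcases not_and_or.1 hx with h | h
  · exact mul_eq_zero_of_left (image_eq_zero_of_notMem_tsupport h) _
  · exact mul_eq_zero_of_right _ (image_eq_zero_of_notMem_tsupport h)

end EuclideanSpace

section Separable

open EuclideanSpace

variable {f g : ℝ → ℝ}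

theorem hasFDerivAt_mul_apply_zero_apply_one {f' g' : ℝ} {x : ℝ²} (hf : HasDerivAt f f' (x 0))
    (hg : HasDerivAt g g' (x 1)) :
    HasFDerivAt (fun y : ℝ² => f (y 0) * g (y 1))
      ((f' * g (x 1)) • (proj 0 : ℝ² →L[ℝ] ℝ) + (f (x 0) * g') • (proj 1 : ℝ² →L[ℝ] ℝ)) x := by
  have h0 := hf.comp_hasFDerivAt x (proj 0 : ℝ² →L[ℝ] ℝ).hasFDerivAt
  have h1 := hg.comp_hasFDerivAt x (proj 1 : ℝ² →L[ℝ] ℝ).hasFDerivAt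
  refine (h0.mul h1).congr_fderiv ?_
  ext y
  simp [smul_smul]
  ring

theorem fderiv_mul_apply_zero_apply_one_single_zero {f' : ℝ} {x : ℝ²}
    (hf : HasDerivAt f f' (x 0)) (hg : DifferentiableAt ℝ g (x 1)) :
    fderiv ℝ (fun y : ℝ² => f (y 0) * g (y 1)) x (single 0 1) = f' * g (x 1) := by
  simp [(hasFDerivAt_mul_apply_zero_apply_one hf hg.hasDerivAt).fderiv]

theorem fderiv_mul_apply_zero_apply_one_single_one {g' : ℝ} {x : ℝ²}
    (hf : DifferentiableAt ℝ f (x 0)) (hg : HasDerivAt g g' (x 1)) :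
    fderiv ℝ (fun y : ℝ² => f (y 0) * g (y 1)) x (single 1 1) = f (x 0) * g' := by
  simp [(hasFDerivAt_mul_apply_zero_apply_one hf.hasDerivAt hg).fderiv]

variable {f' f'' g' g'' : ℝ → ℝ}

theorem laplacian_mul_apply_zero_apply_one
    (hf : ∀ t, HasDerivAt f (f' t) t) (hf' : ∀ t, HasDerivAt f' (f'' t) t)
    (hg : ∀ t, HasDerivAt g (g' t) t) (hg' : ∀ t, HasDerivAt g' (g'' t) t) (x : ℝ²) :
    laplacian (fun y => f (y 0) * g (y 1)) x = f'' (x 0) * g (x 1) + f (x 0) * g'' (x 1) := by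
  simp only [laplacian, Fin.sum_univ_two,
    fderiv_mul_apply_zero_apply_one_single_zero (hf _) (hg _).differentiableAt,
    fderiv_mul_apply_zero_apply_one_single_one (hf _).differentiableAt (hg _)]
  rw [fderiv_mul_apply_zero_apply_one_single_zero (hf' _) (hg _).differentiableAt,
    fderiv_mul_apply_zero_apply_one_single_one (hf _).differentiableAt (hg' _)]

/-- If `f` and `g` are approximate eigenfunctions of `-d²/dt²` for the eigenvalues `1` and `0`,
then `f ⊗ g` is one of `-Δ` for the eigenvalue `1`. -/
theorem integral_sq_add_laplacian_mul_le {δ : ℝ}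
    (hf : ∀ t, HasDerivAt f (f' t) t) (hf' : ∀ t, HasDerivAt f' (f'' t) t)
    (hg : ∀ t, HasDerivAt g (g' t) t) (hg' : ∀ t, HasDerivAt g' (g'' t) t)
    (hfi : Integrable fun t => f t ^ 2) (hf''i : Integrable fun t => (f'' t + f t) ^ 2)
    (hgi : Integrable fun t => g t ^ 2) (hg''i : Integrable fun t => g'' t ^ 2)
    (hδf : ∫ t, (f'' t + f t) ^ 2 ≤ δ * ∫ t, f t ^ 2)
    (hδg : ∫ t, g'' t ^ 2 ≤ δ * ∫ t, g t ^ 2) :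
    ∫ x : ℝ², (f (x 0) * g (x 1) + laplacian (fun y => f (y 0) * g (y 1)) x) ^ 2
      ≤ 4 * δ * ∫ x : ℝ², (f (x 0) * g (x 1)) ^ 2 := by
  have hsplit (x : ℝ²) :
      (f (x 0) * g (x 1) + laplacian (fun y => f (y 0) * g (y 1)) x) ^ 2
        ≤ 2 * ((f'' (x 0) + f (x 0)) ^ 2 * g (x 1) ^ 2) + 2 * (f (x 0) ^ 2 * g'' (x 1) ^ 2) := by
    rw [laplacian_mul_apply_zero_apply_one hf hf' hg hg']
    nlinarith [sq_nonneg ((f'' (x 0) + f (x 0)) * g (x 1) - f (x 0) * g'' (x 1))]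
  have hI₁ := integrable_mul_apply_zero_apply_one hf''i hgi
  have hI₂ := integrable_mul_apply_zero_apply_one hfi hg''i
  have hF : 0 ≤ ∫ t, f t ^ 2 := integral_nonneg fun t => sq_nonneg _
  have hG : 0 ≤ ∫ t, g t ^ 2 := integral_nonneg fun t => sq_nonneg _
  calc ∫ x : ℝ², (f (x 0) * g (x 1) + laplacian (fun y => f (y 0) * g (y 1)) x) ^ 2
      ≤ ∫ x : ℝ², 2 * ((f'' (x 0) + f (x 0)) ^ 2 * g (x 1) ^ 2)
          + 2 * (f (x 0) ^ 2 * g'' (x 1) ^ 2) :=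
        integral_mono_of_nonneg (.of_forall fun _ => sq_nonneg _)
          ((hI₁.const_mul 2).fun_add (hI₂.const_mul 2)) (.of_forall hsplit)
    _ = 2 * (∫ t, (f'' t + f t) ^ 2) * (∫ t, g t ^ 2)
          + 2 * (∫ t, f t ^ 2) * ∫ t, g'' t ^ 2 := by
        rw [integral_add (hI₁.const_mul 2) (hI₂.const_mul 2), integral_const_mul,
          integral_const_mul,
          integral_mul_apply_zero_apply_one (fun t => (f'' t + f t) ^ 2) (fun t => g t ^ 2),
          integral_mul_apply_zero_apply_one (fun t => f t ^ 2) (fun t => g'' t ^ 2)]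
        ring
    _ ≤ 2 * (δ * ∫ t, f t ^ 2) * (∫ t, g t ^ 2)
          + 2 * (∫ t, f t ^ 2) * (δ * ∫ t, g t ^ 2) := by
        gcongr
    _ = 4 * δ * ∫ x : ℝ², (f (x 0) * g (x 1)) ^ 2 := by
        simp only [mul_pow,
          integral_mul_apply_zero_apply_one (fun t => f t ^ 2) (fun t => g t ^ 2)]
        ring

end Separable

section Profile

variable {R : ℝ}

theorem hasDerivAt_comp_div {f f' : ℝ → ℝ} (hf : ∀ s, HasDerivAt f (f' s) s) (R t : ℝ) :
    HasDerivAt (fun s => f (s / R)) (f' (t / R) / R) t := by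
  simpa [div_eq_mul_inv, mul_comm, Function.comp_def] using
    (hf (t / R)).comp t ((hasDerivAt_id t).div_const R)

theorem hasDerivAt_mul_cos {f f' : ℝ → ℝ} (hf : ∀ t, HasDerivAt f (f' t) t) (t : ℝ) :
    HasDerivAt (fun s => f s * cos s) (f' t * cos t - f t * sin t) t := by
  simpa [sub_eq_add_neg] using (hf t).fun_mul (hasDerivAt_cos t)

theorem hasDerivAt_deriv_mul_cos {f f' f'' : ℝ → ℝ} (hf : ∀ t, HasDerivAt f (f' t) t)
    (hf' : ∀ t, HasDerivAt f' (f'' t) t) (t : ℝ) :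
    HasDerivAt (fun s => f' s * cos s - f s * sin s)
      (f'' t * cos t - 2 * f' t * sin t - f t * cos t) t := by
  refine ((hf' t).fun_mul (hasDerivAt_cos t)).fun_sub ((hf t).fun_mul (hasDerivAt_sin t))
    |>.congr_deriv ?_
  ring

theorem integral_sq_comp_div (f : ℝ → ℝ) (hR : 0 < R) :
    ∫ t, f (t / R) ^ 2 = R * ∫ t, f t ^ 2 := by
  simpa [abs_of_pos hR] using Measure.integral_comp_div (fun t => f t ^ 2) R

theorem integrable_sq_comp_div_div_pow {f : ℝ → ℝ} (hf : Integrable fun t => f t ^ 2)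
    (hR : R ≠ 0) (k : ℕ) : Integrable fun t => (f (t / R) / R ^ k) ^ 2 := by
  simpa only [div_pow] using (hf.comp_div hR).div_const _

theorem integral_sq_comp_div_div_pow_le (f : ℝ → ℝ) (hR : 1 ≤ R) {k : ℕ} (hk : 1 ≤ k) :
    ∫ t, (f (t / R) / R ^ k) ^ 2 ≤ ∫ t, f t ^ 2 := by
  have hI : 0 ≤ ∫ t, f t ^ 2 := integral_nonneg fun t => sq_nonneg _
  have hRk : R ≤ (R ^ k) ^ 2 := by
    rw [← pow_mul]
    exact le_self_pow₀ hR (by omega)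
  simp only [div_pow]
  rw [integral_div, integral_sq_comp_div f (by linarith), div_le_iff₀ (by positivity)]
  nlinarith

theorem sq_mul_cos_sub_mul_sin_le (a b t : ℝ) :
    (a * cos t - 2 * b * sin t) ^ 2 ≤ 2 * a ^ 2 + 8 * b ^ 2 := by
  nlinarith [sq_nonneg (a * cos t + 2 * b * sin t),
    mul_le_mul_of_nonneg_left (cos_sq_le_one t) (sq_nonneg a),
    mul_le_mul_of_nonneg_left (sin_sq_le_one t) (sq_nonneg b)]

theorem integrable_sq_comp_div_mul_cos_sub_mul_sin {a b : ℝ → ℝ} (ha : Continuous a)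
    (hb : Continuous b) (ha2 : Integrable fun t => a t ^ 2) (hb2 : Integrable fun t => b t ^ 2)
    (hR : R ≠ 0) :
    Integrable fun t => (a (t / R) / R ^ 2 * cos t - 2 * (b (t / R) / R) * sin t) ^ 2 := by
  have hA := integrable_sq_comp_div_div_pow ha2 hR 2
  have hB : Integrable fun t => (b (t / R) / R) ^ 2 := by
    simpa using integrable_sq_comp_div_div_pow hb2 hR 1
  refine ((hA.const_mul 2).add (hB.const_mul 8)).mono' (by fun_prop) (.of_forall fun t => ?_)
  rw [norm_pow, norm_eq_abs, sq_abs]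
  exact sq_mul_cos_sub_mul_sin_le _ _ t

theorem integral_sq_comp_div_mul_cos_sub_mul_sin_le {a b : ℝ → ℝ}
    (ha2 : Integrable fun t => a t ^ 2) (hb2 : Integrable fun t => b t ^ 2) (hR : 1 ≤ R) :
    ∫ t, (a (t / R) / R ^ 2 * cos t - 2 * (b (t / R) / R) * sin t) ^ 2
      ≤ 2 * (∫ t, a t ^ 2) + 8 * ∫ t, b t ^ 2 := by
  have hR0 : R ≠ 0 := by positivity
  have hA := integrable_sq_comp_div_div_pow ha2 hR0 2
  have hB : Integrable fun t => (b (t / R) / R) ^ 2 := by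
    simpa using integrable_sq_comp_div_div_pow hb2 hR0 1
  have h₁ := integral_sq_comp_div_div_pow_le a hR (k := 2) (by norm_num)
  have h₂ := integral_sq_comp_div_div_pow_le b hR (k := 1) le_rfl
  rw [pow_one] at h₂
  calc ∫ t, (a (t / R) / R ^ 2 * cos t - 2 * (b (t / R) / R) * sin t) ^ 2
      ≤ ∫ t, 2 * (a (t / R) / R ^ 2) ^ 2 + 8 * (b (t / R) / R) ^ 2 :=
        integral_mono_of_nonneg (.of_forall fun _ => sq_nonneg _)
          ((hA.const_mul 2).add (hB.const_mul 8))
          (.of_forall fun t => sq_mul_cos_sub_mul_sin_le _ _ t)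
    _ ≤ 2 * (∫ t, a t ^ 2) + 8 * ∫ t, b t ^ 2 := by
        rw [integral_add (hA.const_mul 2) (hB.const_mul 8), integral_const_mul,
          integral_const_mul]
        linarith

theorem integrable_sq_comp_div_mul_cos {f : ℝ → ℝ} (hf : Continuous f)
    (hfi : Integrable fun t => f t ^ 2) (hR : R ≠ 0) :
    Integrable fun t => (f (t / R) * cos t) ^ 2 :=
  (hfi.comp_div hR).mono' (by fun_prop) <| .of_forall fun t => by
    rw [norm_pow, norm_mul, mul_pow, norm_eq_abs, sq_abs, norm_eq_abs, sq_abs]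
    exact mul_le_of_le_one_right (sq_nonneg _) (cos_sq_le_one t)

theorem integral_sq_comp_div_mul_cos_le {f : ℝ → ℝ} (hfi : Integrable fun t => f t ^ 2)
    (hR : R ≠ 0) : ∫ t, (f (t / R) * cos t) ^ 2 ≤ ∫ t, f (t / R) ^ 2 :=
  integral_mono_of_nonneg (.of_forall fun _ => sq_nonneg _) (hfi.comp_div hR) <|
    .of_forall fun t => by
      dsimp only
      rw [mul_pow]
      exact mul_le_of_le_one_right (sq_nonneg _) (cos_sq_le_one t)

theorem le_integral_sq_comp_div_mul_cos {f : ℝ → ℝ} (hf : ∀ t, |t| ≤ 1 → f t = 1)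
    (hint : Integrable fun t => (f (t / R) * cos t) ^ 2) (hR : 0 < R) :
    R - 1 ≤ ∫ t, (f (t / R) * cos t) ^ 2 := by
  have hon : ∀ t ∈ Set.Icc (-R) R, (f (t / R) * cos t) ^ 2 = cos t ^ 2 := fun t ht => by
    rw [hf _ (by rw [abs_div, abs_of_pos hR, div_le_one hR]; exact abs_le.2 ht), one_mul]
  have hcos : ∫ t in Set.Icc (-R) R, cos t ^ 2 = R + cos R * sin R := by
    rw [integral_Icc_eq_integral_Ioc, ← intervalIntegral.integral_of_le (by linarith),
      integral_cos_sq, cos_neg, sin_neg]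
    ring
  calc R - 1 ≤ R + cos R * sin R := by
        nlinarith [cos_sq_add_sin_sq R, sq_nonneg (cos R + sin R)]
    _ = ∫ t in Set.Icc (-R) R, (f (t / R) * cos t) ^ 2 := by
        rw [setIntegral_congr_fun measurableSet_Icc hon, hcos]
    _ ≤ ∫ t, (f (t / R) * cos t) ^ 2 :=
        setIntegral_le_integral hint (.of_forall fun _ => sq_nonneg _)

end Profile

noncomputable def wavePacket (φ : ℝ → ℝ) (R : ℝ) (x : ℝ²) : ℝ :=
  φ (x 0 / R) * cos (x 0) * φ (x 1 / R)

section WavePacket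

variable {φ : ℝ → ℝ} {R : ℝ}

theorem contDiff_wavePacket {n : WithTop ℕ∞} (hφ : ContDiff ℝ n φ) (R : ℝ) :
    ContDiff ℝ n (wavePacket φ R) := by
  unfold wavePacket
  fun_prop

theorem hasCompactSupport_wavePacket (hφ : HasCompactSupport φ) (hR : R ≠ 0) :
    HasCompactSupport (wavePacket φ R) := by
  have hcos : HasCompactSupport fun t => φ (t / R) * cos t :=
    (hφ.comp_div hR).mul_right (f' := cos)
  have := EuclideanSpace.hasCompactSupport_mul_apply_zero_apply_one hcos (hφ.comp_div hR)
  unfold wavePacket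
  exact this

theorem integral_sq_wavePacket_pos (hφ : Continuous φ) (hφc : HasCompactSupport φ)
    (hφ₁ : ∀ t, |t| ≤ 1 → φ t = 1) (hR : 1 < R) : 0 < ∫ x, wavePacket φ R x ^ 2 := by
  have hφi : Integrable fun t => φ t ^ 2 := hφ.integrable_pow_of_hasCompactSupport hφc two_ne_zero
  have hR0 : R ≠ 0 := by positivity
  have hG := le_integral_sq_comp_div_mul_cos hφ₁ (integrable_sq_comp_div_mul_cos hφ hφi hR0)
    (by linarith)
  have hH := hG.trans (integral_sq_comp_div_mul_cos_le hφi hR0)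
  simp only [wavePacket, mul_pow]
  rw [EuclideanSpace.integral_mul_apply_zero_apply_one (fun t => φ (t / R) ^ 2 * cos t ^ 2)
    (fun t => φ (t / R) ^ 2)]
  simp only [← mul_pow] at hG ⊢
  exact mul_pos (by linarith) (by linarith)

theorem exists_integral_sq_add_laplacian_wavePacket_le (hφ : ContDiff ℝ 2 φ)
    (hφc : HasCompactSupport φ) (hφ₁ : ∀ t, |t| ≤ 1 → φ t = 1) :
    ∃ K, ∀ R, 1 < R → ∫ x, (wavePacket φ R x + laplacian (wavePacket φ R) x) ^ 2
      ≤ K / (R - 1) * ∫ x, wavePacket φ R x ^ 2 := by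
  have hφ' : ContDiff ℝ 1 (deriv φ) := hφ.deriv'
  have hc'' : Continuous (deriv (deriv φ)) := hφ'.continuous_deriv le_rfl
  have hφi : Integrable fun t => φ t ^ 2 :=
    hφ.continuous.integrable_pow_of_hasCompactSupport hφc two_ne_zero
  have hφi' : Integrable fun t => deriv φ t ^ 2 :=
    hφ'.continuous.integrable_pow_of_hasCompactSupport hφc.deriv two_ne_zero
  have hφi'' : Integrable fun t => deriv (deriv φ) t ^ 2 :=
    hc''.integrable_pow_of_hasCompactSupport hφc.deriv.deriv two_ne_zero
  set K := 2 * (∫ t, deriv (deriv φ) t ^ 2) + 8 * ∫ t, deriv φ t ^ 2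
  refine ⟨4 * K, fun R hR => ?_⟩
  have hR0 : R ≠ 0 := by positivity
  have hh := hasDerivAt_comp_div (fun t => (hφ.differentiable two_ne_zero t).hasDerivAt) R
  have hh' (t : ℝ) :
      HasDerivAt (fun s => deriv φ (s / R) / R) (deriv (deriv φ) (t / R) / R ^ 2) t :=
    (hasDerivAt_comp_div (fun t => (hφ'.differentiable one_ne_zero t).hasDerivAt) R t
      |>.div_const R).congr_deriv (by ring)
  have hg := integrable_sq_comp_div_mul_cos hφ.continuous hφi hR0
  have hG := le_integral_sq_comp_div_mul_cos hφ₁ hg (by linarith)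
  have hH := hG.trans (integral_sq_comp_div_mul_cos_le hφi hR0)
  have hQg : ∫ t, (deriv (deriv φ) (t / R) / R ^ 2) ^ 2 ≤ K := by
    have := integral_sq_comp_div_div_pow_le (deriv (deriv φ)) hR.le (k := 2) (by norm_num)
    have : 0 ≤ ∫ t, deriv (deriv φ) t ^ 2 := by positivity
    have : 0 ≤ ∫ t, deriv φ t ^ 2 := by positivity
    linarith
  have hδ {Q I : ℝ} (hQ : Q ≤ K) (hI : R - 1 ≤ I) : Q ≤ K / (R - 1) * I :=
    calc Q ≤ K := hQ
      _ = K / (R - 1) * (R - 1) := (div_mul_cancel₀ K (by linarith)).symm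
      _ ≤ K / (R - 1) * I := mul_le_mul_of_nonneg_left hI (div_nonneg (by positivity) (by linarith))
  have := integral_sq_add_laplacian_mul_le (hasDerivAt_mul_cos hh)
    (hasDerivAt_deriv_mul_cos hh hh') hh hh' hg
    (by simpa only [sub_add_cancel] using
      integrable_sq_comp_div_mul_cos_sub_mul_sin hc'' hφ'.continuous hφi'' hφi' hR0)
    (hφi.comp_div hR0) (integrable_sq_comp_div_div_pow hφi'' hR0 2)
    (by simpa only [sub_add_cancel] using
      hδ (integral_sq_comp_div_mul_cos_sub_mul_sin_le hφi'' hφi' hR.le) hG)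
    (hδ hQg hH)
  unfold wavePacket
  rw [mul_div_assoc]
  exact this

end WavePacket

theorem exists_integral_sq_add_laplacian_lt {μ : ℝ} (hμ : 0 < μ) :
    ∃ v : ℝ² → ℝ, ContDiff ℝ (⊤ : ℕ∞) v ∧ HasCompactSupport v ∧
      ∫ x, (v x + laplacian v x) ^ 2 < μ * ∫ x, v x ^ 2 := by
  let φ : ContDiffBump (0 : ℝ) := ⟨1, 2, one_pos, one_lt_two⟩
  have hφ₁ (t : ℝ) (ht : |t| ≤ 1) : φ t = 1 :=
    φ.one_of_mem_closedBall (by simpa [Real.dist_eq] using ht)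
  obtain ⟨K, hK⟩ :=
    exists_integral_sq_add_laplacian_wavePacket_le φ.contDiff φ.hasCompactSupport hφ₁
  set R := 2 + |K| / μ
  have hR : 1 < R := by
    have : 0 ≤ |K| / μ := by positivity
    linarith
  have hKR : K / (R - 1) < μ := by
    have : μ * (R - 1) = μ + |K| := by
      simp only [R]
      field_simp
      ring
    rw [div_lt_iff₀ (by linarith)]
    linarith [le_abs_self K]
  refine ⟨wavePacket φ R, contDiff_wavePacket φ.contDiff R,
    hasCompactSupport_wavePacket φ.hasCompactSupport (by linarith), (hK R hR).trans_lt ?_⟩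
  exact mul_lt_mul_of_pos_right hKR
    (integral_sq_wavePacket_pos φ.continuous φ.hasCompactSupport hφ₁ hR)

/-- For every `μ > 0` there is a smooth compactly supported `v` with
`∫ (v + Δv)² < μ ∫ v²`; consequently, for any `β` there is `ε₀ > 0` with
`E[εv] < 0 = E[0]` for all `0 < ε < ε₀`, so the uniform state `u = 0` is not a
local minimizer of the free energy along the ray through `v`. -/
theorem zero_not_local_min (μ : ℝ) (hμ : 0 < μ) :
    ∃ v : EuclideanSpace ℝ (Fin 2) → ℝ,
      ContDiff ℝ (⊤ : ℕ∞) v ∧ HasCompactSupport v ∧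
      (∫ x, (v x + laplacian v x) ^ 2) < μ * ∫ x, v x ^ 2 ∧
      ∀ β : ℝ, ∃ ε₀ > (0 : ℝ), ∀ ε : ℝ, 0 < ε → ε < ε₀ →
        freeEnergy μ β (ε • v) < 0 ∧ freeEnergy μ β 0 = 0 := by
  obtain ⟨v, hv, hvc, hlt⟩ := exists_integral_sq_add_laplacian_lt hμ
  refine ⟨v, hv, hvc, hlt, fun β => ?_⟩
  obtain ⟨ε₀, hε₀, hneg⟩ := exists_pos_forall_quartic_lt_zero
    (by linarith : (∫ x, (v x + laplacian v x) ^ 2) / 2 - μ / 2 * ∫ x, v x ^ 2 < 0)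
    (β / 3 * ∫ x, v x * ‖gradient v x‖ ^ 2) ((∫ x, v x ^ 4) / 4)
  refine ⟨ε₀, hε₀, fun ε hε hεε₀ => ⟨?_, freeEnergy_zero μ β⟩⟩
  rw [freeEnergy_smul (hv.of_le (WithTop.coe_le_coe.2 le_top)) hvc]
  exact hneg ε hε hεε₀
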